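/- Let n ≥ 2 and let f : ℝⁿ → ℝ be continuous, nonnegative and Lebesgue integrable with α := ∫_{ℝⁿ} f dx < c_n, such that y ↦ log(|y|/|x−y|) f(y) is Lebesgue integrable for every x ∈ ℝⁿ. Set u₊(x) := (1/c_n) ∫_{ℝⁿ} log(|y|/|x−y|) f(y) dy. Then e^{n u₊} is an A₁ weight: there exists a constant C depending only on n and α such that for every x ∈ ℝⁿ and every r > 0, (1/|B(x,r)|) ∫_{B(x,r)} e^{n u₊(y)} dy ≤ C e^{n u₊(x)}; equivalently, the Hardy–Littlewood maximal function satisfies M(e^{n u₊})(x) ≤ C e^{n u₊(x)} for every x ∈ ℝⁿ. -/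

import Mathlib

open MeasureTheory Metric Set
open scoped ENNReal

/-- `c_n := 2^{n-2} Γ(n/2) π^{n/2}`. -/
noncomputable def cN (n : ℕ) : ℝ :=
  (2 : ℝ) ^ ((n : ℝ) - 2) * Real.Gamma ((n : ℝ) / 2) * Real.pi ^ ((n : ℝ) / 2)

/-- Logarithmic potential `u(x) = (1/c_n) ∫ log(|y|/|x-y|) f(y) dy`. -/
noncomputable def logPot (n : ℕ) (f : EuclideanSpace ℝ (Fin n) → ℝ)
    (x : EuclideanSpace ℝ (Fin n)) : ℝ :=
  (1 / cN n) * ∫ y, Real.log (‖y‖ / ‖x - y‖) * f y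

/-- `ω` is an `A_p` weight with constant `K` (for `p > 1`):
for every ball `B`, `(⨍_B ω) · (⨍_B ω^{-1/(p-1)})^{p-1} ≤ K`. -/
def IsApWeight (n : ℕ) (p K : ℝ) (ω : EuclideanSpace ℝ (Fin n) → ℝ) : Prop :=
  ∀ (x : EuclideanSpace ℝ (Fin n)) (r : ℝ), 0 < r →
    ((volume (ball x r)).toReal⁻¹ * ∫ y in ball x r, ω y) *
      ((volume (ball x r)).toReal⁻¹ *
        ∫ y in ball x r, (ω y) ^ (-(1 / (p - 1)) : ℝ)) ^ (p - 1) ≤ K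

/-- `δ_ω(x,y) = (∫_{B_{xy}} ω)^{1/n}`, where `B_{xy}` is the closed ball with
center `(x+y)/2` and radius `|x-y|/2`. -/
noncomputable def deltaW (n : ℕ) (ω : EuclideanSpace ℝ (Fin n) → ℝ)
    (x y : EuclideanSpace ℝ (Fin n)) : ℝ :=
  (∫ z in closedBall (midpoint ℝ x y) (dist x y / 2), ω z) ^ ((1 : ℝ) / n)

/-- `d_ω(x,y)`: infimum of `∫₀^L ω(γ(t))^{1/n} dt` over all `L ≥ 0` and all
1-Lipschitz curves `γ : [0,L] → ℝⁿ` joining `x` to `y` inside `B_{xy}`. -/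
noncomputable def dW (n : ℕ) (ω : EuclideanSpace ℝ (Fin n) → ℝ)
    (x y : EuclideanSpace ℝ (Fin n)) : ℝ :=
  sInf {d : ℝ | ∃ (L : ℝ) (γ : ℝ → EuclideanSpace ℝ (Fin n)),
    0 ≤ L ∧ LipschitzOnWith 1 γ (Set.Icc 0 L) ∧ γ 0 = x ∧ γ L = y ∧
    (∀ t ∈ Set.Icc 0 L, γ t ∈ closedBall (midpoint ℝ x y) (dist x y / 2)) ∧
    d = ∫ t in (0 : ℝ)..L, (ω (γ t)) ^ ((1 : ℝ) / n)}

/-- One-dimensional Hausdorff content: infimum of `Σᵢ diam Bᵢ` over countable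
covers of `E` by balls `Bᵢ`. -/
noncomputable def H1content {n : ℕ} (E : Set (EuclideanSpace ℝ (Fin n))) : ℝ≥0∞ :=
  ⨅ (c : ℕ → EuclideanSpace ℝ (Fin n) × ℝ) (_ : E ⊆ ⋃ i, ball (c i).1 (c i).2),
    ∑' i, ENNReal.ofReal (2 * (c i).2)

/-!
Write `u = logPot n f`, `α = ∫ f` and `β = n α / c_n`, so that `0 ≤ β < n`. Since
`n (u y - u x) = (β / α) ∫ log (|x - z| / |y - z|) f z dz`, Jensen's inequality for the
probability measure `f / α` gives `e^{n u y} ≤ e^{n u x} α⁻¹ ∫ |x - z|^β |y - z|^{-β} f z dz`.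
Averaging over `y ∈ B(x, r)` and swapping the integrals reduces the claim to the `A₁` property of
the Riesz kernels `|· - z|^{-β}`, uniformly in `z`: their average over `B(x, r)` is at most
`K |x - z|^{-β}`. This holds pointwise when `|x - z| ≥ 2r`, and by scaling otherwise, as then
`B(x, r) ⊆ B(z, 3r)`.
-/

open Module

section RieszKernel

variable {E : Type*} [NormedAddCommGroup E] [NormedSpace ℝ E] [FiniteDimensional ℝ E]
  [MeasurableSpace E] [BorelSpace E] [Nontrivial E] (μ : Measure E) [μ.IsAddHaarMeasure]

theorem lintegral_ball_norm_sub_rpow_neg {β : ℝ} (hβ : β < finrank ℝ E) (z : E) {R : ℝ}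
    (hR : 0 < R) :
    ∫⁻ y in ball z R, ENNReal.ofReal (‖y - z‖ ^ (-β)) ∂μ =
      ENNReal.ofReal (R ^ (finrank ℝ E - β) * ∫ y in ball (0 : E) 1, ‖y‖ ^ (-β) ∂μ) := by
  have hpre : (· - z) ⁻¹' ball (0 : E) R = ball z R := by
    ext y; simp [dist_eq_norm]
  rw [← hpre, (measurePreserving_sub_right μ z).setLIntegral_comp_preimage_emb
    (measurableEmbedding_subRight z) (fun y => ENNReal.ofReal (‖y‖ ^ (-β)))]
  have hint : IntegrableOn (fun y : E => ‖y‖ ^ (-β)) (ball 0 R) μ :=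
    integrableOn_ball_of_norm_le_rpow finrank_pos hβ (C := 1)
      (ae_of_all _ fun y => by rw [Real.norm_of_nonneg (by positivity), one_mul])
      (measurable_norm.pow_const _).aestronglyMeasurable
  rw [← ofReal_integral_eq_lintegral_ofReal hint (ae_of_all _ fun _ => by positivity)]
  have hscale := Measure.setIntegral_comp_smul_of_pos μ (fun y : E => ‖y‖ ^ (-β)) (ball 0 1) hR
  rw [smul_unitBall_of_pos hR, smul_eq_mul] at hscale
  simp only [norm_smul, Real.norm_of_nonneg hR.le, Real.mul_rpow hR.le (norm_nonneg _),
    integral_const_mul] at hscale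
  rw [sub_eq_add_neg, Real.rpow_add hR, Real.rpow_natCast, mul_assoc, hscale, ← mul_assoc,
    mul_inv_cancel₀ (by positivity), one_mul]

theorem exists_lintegral_ball_norm_sub_rpow_neg_le {β : ℝ} (hβ0 : 0 ≤ β)
    (hβ : β < finrank ℝ E) :
    ∃ K : ℝ, 1 ≤ K ∧ ∀ (x z : E) (r : ℝ), 0 < r → z ≠ x →
      ∫⁻ y in ball x r, ENNReal.ofReal (‖y - z‖ ^ (-β)) ∂μ ≤
        ENNReal.ofReal (K * ‖x - z‖ ^ (-β)) * μ (ball x r) := by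
  set I := ∫ y in ball (0 : E) 1, ‖y‖ ^ (-β) ∂μ
  have hI : 0 ≤ I := setIntegral_nonneg measurableSet_ball fun _ _ => by positivity
  have hB1 : 0 < μ.real (ball 0 1) :=
    ENNReal.toReal_pos (measure_ball_pos μ 0 one_pos).ne' measure_ball_lt_top.ne
  refine ⟨2 ^ β + 3 ^ (finrank ℝ E - β) * 2 ^ β * I / μ.real (ball 0 1),
    le_add_of_le_of_nonneg (Real.one_le_rpow one_le_two hβ0) (by positivity), ?_⟩
  intro x z r hr hzx
  have hxz : 0 < ‖x - z‖ := norm_pos_iff.2 (sub_ne_zero.2 hzx.symm)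
  rcases le_or_gt (2 * r) ‖x - z‖ with hfar | hnear
  · calc ∫⁻ y in ball x r, ENNReal.ofReal (‖y - z‖ ^ (-β)) ∂μ
        ≤ ∫⁻ _ in ball x r, ENNReal.ofReal (2 ^ β * ‖x - z‖ ^ (-β)) ∂μ := by
          refine setLIntegral_mono' measurableSet_ball fun y hy => ENNReal.ofReal_le_ofReal ?_
          have hy : ‖x - z‖ / 2 ≤ ‖y - z‖ := by
            have := norm_sub_le_norm_sub_add_norm_sub x y z
            rw [mem_ball_iff_norm'] at hy
            linarith
          calc ‖y - z‖ ^ (-β) ≤ (‖x - z‖ / 2) ^ (-β) :=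
                Real.rpow_le_rpow_of_nonpos (by positivity) hy (neg_nonpos.2 hβ0)
            _ = 2 ^ β * ‖x - z‖ ^ (-β) := by
                rw [Real.div_rpow hxz.le zero_le_two, Real.rpow_neg zero_le_two, div_inv_eq_mul,
                  mul_comm]
      _ = ENNReal.ofReal (2 ^ β * ‖x - z‖ ^ (-β)) * μ (ball x r) := setLIntegral_const _ _
      _ ≤ _ := by gcongr; exact le_add_of_nonneg_right (by positivity)
  · have hsub : ball x r ⊆ ball z (3 * r) := fun y hy => by
      have := norm_sub_le_norm_sub_add_norm_sub y x z
      rw [mem_ball_iff_norm] at hy ⊢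
      linarith
    have hrβ : r ^ (-β) ≤ 2 ^ β * ‖x - z‖ ^ (-β) :=
      calc r ^ (-β) = 2 ^ β * (2 * r) ^ (-β) := by
            rw [Real.mul_rpow zero_le_two hr.le, ← mul_assoc, ← Real.rpow_add two_pos,
              add_neg_cancel, Real.rpow_zero, one_mul]
        _ ≤ 2 ^ β * ‖x - z‖ ^ (-β) :=
            mul_le_mul_of_nonneg_left
              (Real.rpow_le_rpow_of_nonpos hxz hnear.le (neg_nonpos.2 hβ0)) (by positivity)
    calc ∫⁻ y in ball x r, ENNReal.ofReal (‖y - z‖ ^ (-β)) ∂μ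
        ≤ ∫⁻ y in ball z (3 * r), ENNReal.ofReal (‖y - z‖ ^ (-β)) ∂μ := lintegral_mono_set hsub
      _ = ENNReal.ofReal ((3 * r) ^ (finrank ℝ E - β) * I) :=
          lintegral_ball_norm_sub_rpow_neg μ hβ z (by positivity)
      _ ≤ ENNReal.ofReal ((2 ^ β + 3 ^ (finrank ℝ E - β) * 2 ^ β * I / μ.real (ball 0 1)) *
            ‖x - z‖ ^ (-β) * (r ^ finrank ℝ E * μ.real (ball 0 1))) := by
          refine ENNReal.ofReal_le_ofReal ?_
          calc (3 * r) ^ (finrank ℝ E - β) * I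
              = 3 ^ (finrank ℝ E - β) * r ^ finrank ℝ E * I * r ^ (-β) := by
                rw [Real.mul_rpow zero_le_three hr.le, sub_eq_add_neg, Real.rpow_add hr,
                  Real.rpow_natCast]
                ring
            _ ≤ 3 ^ (finrank ℝ E - β) * r ^ finrank ℝ E * I * (2 ^ β * ‖x - z‖ ^ (-β)) := by
                gcongr
            _ = 3 ^ (finrank ℝ E - β) * 2 ^ β * I / μ.real (ball 0 1) * ‖x - z‖ ^ (-β) *
                  (r ^ finrank ℝ E * μ.real (ball 0 1)) := by
                field_simp
            _ ≤ _ := by gcongr; exact le_add_of_nonneg_left (by positivity)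
      _ = _ := by
          rw [ENNReal.ofReal_mul (by positivity), ENNReal.ofReal_mul (by positivity),
            ENNReal.ofReal_mul (by positivity), Measure.addHaar_ball μ x hr.le, measureReal_def,
            ENNReal.ofReal_toReal measure_ball_lt_top.ne]

end RieszKernel

theorem ofReal_integral_le_lintegral_ofReal {X : Type*} [MeasurableSpace X] {μ : Measure X}
    {h : X → ℝ} (hh : Integrable h μ) :
    ENNReal.ofReal (∫ x, h x ∂μ) ≤ ∫⁻ x, ENNReal.ofReal (h x) ∂μ :=
  calc ENNReal.ofReal (∫ x, h x ∂μ) ≤ ENNReal.ofReal (∫⁻ x, ENNReal.ofReal (h x) ∂μ).toReal := by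
        rw [integral_eq_lintegral_pos_part_sub_lintegral_neg_part hh]
        exact ENNReal.ofReal_le_ofReal (sub_le_self _ ENNReal.toReal_nonneg)
    _ ≤ ∫⁻ x, ENNReal.ofReal (h x) ∂μ := ENNReal.ofReal_toReal_le

/-- Jensen's inequality for `exp` and the probability measure `f μ / ∫ f dμ`. -/
theorem ofReal_exp_integral_div_mul_le {X : Type*} [MeasurableSpace X] {μ : Measure X}
    {f g : X → ℝ} (hf0 : ∀ x, 0 ≤ f x) (hf : Integrable f μ)
    (hgf : Integrable (fun x => g x * f x) μ) :
    ENNReal.ofReal (Real.exp ((∫ x, g x * f x ∂μ) / ∫ x, f x ∂μ) * ∫ x, f x ∂μ) ≤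
      ∫⁻ x, ENNReal.ofReal (Real.exp (g x) * f x) ∂μ := by
  set A := ∫ x, f x ∂μ
  set m := (∫ x, g x * f x ∂μ) / A
  rcases eq_or_ne A 0 with hA | hA
  · simp [hA]
  -- integrate the tangent line `exp m * (1 + t - m) ≤ exp t` of `exp` at `m` against `f μ`
  have htangent : ∀ x, Real.exp m * ((1 - m) * f x + g x * f x) ≤ Real.exp (g x) * f x := by
    intro x
    have := Real.add_one_le_exp (g x - m)
    rw [Real.exp_sub, le_div_iff₀ (Real.exp_pos m)] at this
    nlinarith [hf0 x, Real.exp_pos m]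
  have hint : Integrable (fun x => Real.exp m * ((1 - m) * f x + g x * f x)) μ :=
    ((hf.const_mul _).add hgf).const_mul _
  calc ENNReal.ofReal (Real.exp m * A)
      = ENNReal.ofReal (∫ x, Real.exp m * ((1 - m) * f x + g x * f x) ∂μ) := by
        have hm : ∫ x, g x * f x ∂μ = m * A := (div_mul_cancel₀ _ hA).symm
        rw [integral_const_mul, integral_add (hf.const_mul _) hgf, integral_const_mul, hm]
        congr 1
        ring
    _ ≤ ∫⁻ x, ENNReal.ofReal (Real.exp m * ((1 - m) * f x + g x * f x)) ∂μ :=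
        ofReal_integral_le_lintegral_ofReal hint
    _ ≤ ∫⁻ x, ENNReal.ofReal (Real.exp (g x) * f x) ∂μ :=
        lintegral_mono fun x => ENNReal.ofReal_le_ofReal (htangent x)

theorem setAverage_le_of_lintegral_le {X : Type*} [MeasurableSpace X] {μ : Measure X} {s : Set X}
    {g : X → ℝ} {c : ℝ} (hc : 0 ≤ c)
    (h : ∫⁻ x in s, ENNReal.ofReal ‖g x‖ ∂μ ≤ ENNReal.ofReal c * μ s) :
    ⨍ x in s, g x ∂μ ≤ c := by
  rw [setAverage_eq, smul_eq_mul]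
  rcases eq_or_ne (μ s) ⊤ with hs | hs
  · simp [measureReal_def, hs, hc]
  have hint : ∫ x in s, g x ∂μ ≤ c * μ.real s :=
    calc ∫ x in s, g x ∂μ ≤ ‖∫ x in s, g x ∂μ‖ := Real.le_norm_self _
      _ ≤ (∫⁻ x in s, ENNReal.ofReal ‖g x‖ ∂μ).toReal := norm_integral_le_lintegral_norm _
      _ ≤ (ENNReal.ofReal c * μ s).toReal :=
          ENNReal.toReal_mono (ENNReal.mul_ne_top ENNReal.ofReal_ne_top hs) h
      _ = c * μ.real s := by rw [ENNReal.toReal_mul, ENNReal.toReal_ofReal hc, measureReal_def]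
  rcases (measureReal_nonneg (μ := μ) (s := s)).eq_or_lt with h0 | hpos
  · simp [← h0, hc]
  · rwa [inv_mul_le_iff₀ hpos, mul_comm]

theorem log_div_mul_sub_log_div_mul_ae_eq {E : Type*} [NormedAddCommGroup E] [MeasurableSpace E]
    {μ : Measure E} [NullSingletonClass μ] (g : E → ℝ) (x y : E) :
    (fun z => Real.log (‖z‖ / ‖y - z‖) * g z - Real.log (‖z‖ / ‖x - z‖) * g z) =ᵐ[μ]
      fun z => Real.log (‖x - z‖ / ‖y - z‖) * g z := by
  filter_upwards [μ.ae_ne 0, μ.ae_ne x, μ.ae_ne y] with z h0 hx hy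
  have n0 : ‖z‖ ≠ 0 := norm_ne_zero_iff.2 h0
  have nx : ‖x - z‖ ≠ 0 := norm_ne_zero_iff.2 (sub_ne_zero.2 hx.symm)
  have ny : ‖y - z‖ ≠ 0 := norm_ne_zero_iff.2 (sub_ne_zero.2 hy.symm)
  rw [Real.log_div n0 ny, Real.log_div n0 nx, Real.log_div nx ny]
  ring

section LogPotential

variable {n : ℕ} {f : EuclideanSpace ℝ (Fin n) → ℝ}

theorem cN_pos (hn : n ≠ 0) : 0 < cN n := by
  have : (0 : ℝ) < n := by positivity
  unfold cN
  have := Real.Gamma_pos_of_pos (by positivity : (0 : ℝ) < n / 2)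
  positivity

theorem logPot_eq_zero_of_ae_eq_zero (hf : f =ᵐ[volume] 0) : logPot n f = 0 := by
  funext x
  rw [logPot, integral_eq_zero_of_ae (hf.mono fun z hz => by simp [hz]), mul_zero, Pi.zero_apply]

variable [NeZero n]

theorem integrable_log_norm_sub_div_mul
    (hlog : ∀ x : EuclideanSpace ℝ (Fin n),
      Integrable (fun y => Real.log (‖y‖ / ‖x - y‖) * f y)) (x y : EuclideanSpace ℝ (Fin n)) :
    Integrable (fun z => Real.log (‖x - z‖ / ‖y - z‖) * f z) :=
  ((hlog y).sub (hlog x)).congr (log_div_mul_sub_log_div_mul_ae_eq f x y)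

theorem logPot_sub_logPot
    (hlog : ∀ x : EuclideanSpace ℝ (Fin n),
      Integrable (fun y => Real.log (‖y‖ / ‖x - y‖) * f y)) (x y : EuclideanSpace ℝ (Fin n)) :
    logPot n f y - logPot n f x = 1 / cN n * ∫ z, Real.log (‖x - z‖ / ‖y - z‖) * f z := by
  rw [logPot, logPot, ← mul_sub, ← integral_sub (hlog y) (hlog x),
    integral_congr_ae (log_div_mul_sub_log_div_mul_ae_eq f x y)]

theorem ofReal_exp_logPot_mul_le (hf0 : ∀ y, 0 ≤ f y) (hf : Integrable f)
    (hlog : ∀ x : EuclideanSpace ℝ (Fin n),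
      Integrable (fun y => Real.log (‖y‖ / ‖x - y‖) * f y)) (x y : EuclideanSpace ℝ (Fin n)) :
    ENNReal.ofReal (Real.exp (n * logPot n f y)) * ENNReal.ofReal (∫ z, f z) ≤
      ENNReal.ofReal (Real.exp (n * logPot n f x)) *
        ∫⁻ z, ENNReal.ofReal (‖y - z‖ ^ (-(n / cN n * ∫ z, f z))) *
          ENNReal.ofReal (‖x - z‖ ^ (n / cN n * ∫ z, f z) * f z) := by
  set A := ∫ z, f z
  set β := n / cN n * A
  rw [← ENNReal.ofReal_mul (Real.exp_nonneg _), ← add_sub_cancel (logPot n f x) (logPot n f y),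
    mul_add, Real.exp_add, mul_assoc, ENNReal.ofReal_mul (Real.exp_nonneg _)]
  gcongr
  rcases eq_or_ne A 0 with hA | hA
  · simp [hA]
  have hI := (integrable_log_norm_sub_div_mul hlog x y).const_mul β
  simp only [← mul_assoc] at hI
  calc ENNReal.ofReal (Real.exp (n * (logPot n f y - logPot n f x)) * A)
      = ENNReal.ofReal (Real.exp ((∫ z, β * Real.log (‖x - z‖ / ‖y - z‖) * f z) / A) * A) := by
        simp only [logPot_sub_logPot hlog, mul_assoc, integral_const_mul, β]
        rw [mul_div_assoc, mul_div_cancel_left₀ _ hA]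
        ring_nf
    _ ≤ ∫⁻ z, ENNReal.ofReal (Real.exp (β * Real.log (‖x - z‖ / ‖y - z‖)) * f z) :=
        ofReal_exp_integral_div_mul_le hf0 hf hI
    _ = _ := by
        refine lintegral_congr_ae ?_
        filter_upwards [volume.ae_ne x, volume.ae_ne y] with z hx hy
        have nx : 0 < ‖x - z‖ := norm_pos_iff.2 (sub_ne_zero.2 hx.symm)
        have ny : 0 < ‖y - z‖ := norm_pos_iff.2 (sub_ne_zero.2 hy.symm)
        rw [← ENNReal.ofReal_mul (by positivity), mul_comm β,
          ← Real.rpow_def_of_pos (by positivity), Real.div_rpow nx.le ny.le, Real.rpow_neg ny.le]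
        ring_nf

theorem lintegral_ball_exp_logPot_le (hf0 : ∀ y, 0 ≤ f y) (hf : Integrable f)
    (hlog : ∀ x : EuclideanSpace ℝ (Fin n),
      Integrable (fun y => Real.log (‖y‖ / ‖x - y‖) * f y)) (hA : 0 < ∫ z, f z) {K : ℝ}
    (hK : ∀ (x z : EuclideanSpace ℝ (Fin n)) (r : ℝ), 0 < r → z ≠ x →
      ∫⁻ y in ball x r, ENNReal.ofReal (‖y - z‖ ^ (-(n / cN n * ∫ z, f z))) ≤
        ENNReal.ofReal (K * ‖x - z‖ ^ (-(n / cN n * ∫ z, f z))) * volume (ball x r))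
    (x : EuclideanSpace ℝ (Fin n)) {r : ℝ} (hr : 0 < r) :
    ∫⁻ y in ball x r, ENNReal.ofReal (Real.exp (n * logPot n f y)) ≤
      ENNReal.ofReal (K * Real.exp (n * logPot n f x)) * volume (ball x r) := by
  set A := ∫ z, f z
  set β := n / cN n * A
  set F : EuclideanSpace ℝ (Fin n) → EuclideanSpace ℝ (Fin n) → ℝ≥0∞ :=
    fun y z => ENNReal.ofReal (‖y - z‖ ^ (-β)) * ENNReal.ofReal (‖x - z‖ ^ β * f z)
  set ex := ENNReal.ofReal (Real.exp (n * logPot n f x))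
  have hF : AEMeasurable (Function.uncurry F) ((volume.restrict (ball x r)).prod volume) := by
    have := hf.aemeasurable.comp_snd (μ := volume.restrict (ball x r))
    unfold F Function.uncurry
    fun_prop
  have hinner : ∀ z, z ≠ x → ∫⁻ y in ball x r, F y z ≤
      volume (ball x r) * ENNReal.ofReal K * ENNReal.ofReal (f z) := fun z hzx => by
    have hxz : 0 < ‖x - z‖ := norm_pos_iff.2 (sub_ne_zero.2 hzx.symm)
    calc ∫⁻ y in ball x r, F y z
        = (∫⁻ y in ball x r, ENNReal.ofReal (‖y - z‖ ^ (-β))) *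
            ENNReal.ofReal (‖x - z‖ ^ β * f z) := lintegral_mul_const' _ _ ENNReal.ofReal_ne_top
      _ ≤ ENNReal.ofReal (K * ‖x - z‖ ^ (-β)) * volume (ball x r) *
            ENNReal.ofReal (‖x - z‖ ^ β * f z) := by
          gcongr
          exact hK x z r hr hzx
      _ = volume (ball x r) * ENNReal.ofReal K * ENNReal.ofReal (f z) := by
          have hcancel : K * ‖x - z‖ ^ (-β) * (‖x - z‖ ^ β * f z) = K * f z := by
            rw [← mul_one (K * f z), ← Real.rpow_zero ‖x - z‖, ← neg_add_cancel β,
              Real.rpow_add hxz]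
            ring
          rw [mul_right_comm, ← ENNReal.ofReal_mul' (mul_nonneg (by positivity) (hf0 z)),
            hcancel, ENNReal.ofReal_mul' (hf0 z)]
          ring
  refine (ENNReal.mul_le_mul_iff_left (ENNReal.ofReal_pos.2 hA).ne' ENNReal.ofReal_ne_top).1 ?_
  calc (∫⁻ y in ball x r, ENNReal.ofReal (Real.exp (n * logPot n f y))) * ENNReal.ofReal A
      = ∫⁻ y in ball x r, ENNReal.ofReal (Real.exp (n * logPot n f y)) * ENNReal.ofReal A :=
        (lintegral_mul_const' _ _ ENNReal.ofReal_ne_top).symm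
    _ ≤ ∫⁻ y in ball x r, ex * ∫⁻ z, F y z :=
        lintegral_mono fun y => ofReal_exp_logPot_mul_le hf0 hf hlog x y
    _ = ex * ∫⁻ z, ∫⁻ y in ball x r, F y z := by
        rw [lintegral_const_mul' _ _ ENNReal.ofReal_ne_top, lintegral_lintegral_swap hF]
    _ ≤ ex * ∫⁻ z, volume (ball x r) * ENNReal.ofReal K * ENNReal.ofReal (f z) := by
        gcongr ex * ?_
        exact lintegral_mono_ae ((volume.ae_ne x).mono hinner)
    _ = ENNReal.ofReal (K * Real.exp (n * logPot n f x)) * volume (ball x r) *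
          ENNReal.ofReal A := by
        rw [lintegral_const_mul' _ _ (ENNReal.mul_ne_top measure_ball_lt_top.ne
          ENNReal.ofReal_ne_top), ← ofReal_integral_eq_lintegral_ofReal hf (ae_of_all _ hf0),
          ENNReal.ofReal_mul' (Real.exp_nonneg _)]
        ring

end LogPotential

/-- Theorem 4.1. If `f ≥ 0` is integrable with
`α = ∫ f < c_n` and `u₊ = logPot f`, then `e^{n u₊}` is an `A₁` weight with
constant depending only on `n` and `α`: every ball average of `e^{n u₊}` centered
at `x` is at most `C e^{n u₊(x)}` (equivalently `M(e^{n u₊}) ≤ C e^{n u₊}`). -/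
theorem expLogPot_isA1
    (n : ℕ) (hn : 2 ≤ n) (α : ℝ) (hα : α < cN n) :
    ∃ C : ℝ, 0 < C ∧
      ∀ f : EuclideanSpace ℝ (Fin n) → ℝ,
        Continuous f →
        (∀ y, 0 ≤ f y) →
        Integrable f →
        (∀ x : EuclideanSpace ℝ (Fin n),
          Integrable (fun y => Real.log (‖y‖ / ‖x - y‖) * f y)) →
        (∫ y, f y) = α →
        ∀ (x : EuclideanSpace ℝ (Fin n)) (r : ℝ), 0 < r →
          (volume (ball x r)).toReal⁻¹ *
              (∫ y in ball x r, Real.exp ((n : ℝ) * logPot n f y)) ≤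
            C * Real.exp ((n : ℝ) * logPot n f x) := by
  have : NeZero n := ⟨by omega⟩
  rcases lt_or_ge α 0 with hα0 | hα0
  · exact ⟨1, one_pos, fun f _ hf0 _ _ hfα => absurd (hfα ▸ integral_nonneg hf0) (not_le.2 hα0)⟩
  have hc := cN_pos (NeZero.ne n)
  obtain ⟨K, hK1, hK⟩ := exists_lintegral_ball_norm_sub_rpow_neg_le
    (volume : Measure (EuclideanSpace ℝ (Fin n))) (β := n / cN n * α) (by positivity) (by
      rw [finrank_euclideanSpace_fin, div_mul_eq_mul_div, div_lt_iff₀ hc]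
      exact mul_lt_mul_of_pos_left hα (by positivity))
  refine ⟨K, by linarith, fun f _ hf0 hf hlog hfα x r hr => ?_⟩
  rw [← measureReal_def, ← smul_eq_mul, ← setAverage_eq]
  refine setAverage_le_of_lintegral_le (by positivity) ?_
  simp only [Real.norm_eq_abs, Real.abs_exp]
  rcases hα0.eq_or_lt with rfl | hαpos
  · rw [logPot_eq_zero_of_ae_eq_zero ((integral_eq_zero_iff_of_nonneg hf0 hf).1 hfα)]
    simp only [Pi.zero_apply, mul_zero, Real.exp_zero, ENNReal.ofReal_one, mul_one,
      setLIntegral_one]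
    exact le_mul_of_one_le_left zero_le (ENNReal.one_le_ofReal.2 hK1)
  · subst hfα
    exact lintegral_ball_exp_logPot_le hf0 hf hlog hαpos hK x hr
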